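/- arXiv:1801.01105 — 9 statements merged into one kernel-verified Lean document; each statement's English description precedes it below -/
import Mathlib

section
/- For every positive integer m, the integer k_m := ⌊(1 − √2/2)·m⌉ (the nearest integer to (1 − √2/2)m) satisfies u_m − 1/2 ≤ k_m < u_m + 1/2, where u_m := m − √(2m² − 1)/2. -/
/-!
Rounding puts `k` within `1/2` of `x = (1 - √2/2) m`, and `x < u` because `√(2m² - 1) < √2 m`;
this gives the upper bound. For the lower bound, `n = 2(m - k) - 1` satisfies `n ≤ √2 m`. No integer
lies in `(√(2m² - 1), √2 m]`, since its square would be squeezed to `2m²`, contradicting the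
irrationality of `√2`; hence `n ≤ √(2m² - 1)`, which is `u - 1/2 ≤ k`.
-/

theorem Int.sq_ne_two_mul_sq {n m : ℤ} (hm : m ≠ 0) : n ^ 2 ≠ 2 * m ^ 2 := by
  intro h
  apply irrational_sqrt_two
  refine ⟨|(n : ℚ) / m|, ?_⟩
  have hmR : (m : ℝ) ≠ 0 := by exact_mod_cast hm
  have hq : ((n : ℝ) / m) ^ 2 = 2 := by
    rw [div_pow, div_eq_iff (pow_ne_zero 2 hmR)]; exact_mod_cast h
  push_cast
  rw [← Real.sqrt_sq_eq_abs, hq]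

theorem intCast_le_sqrt_two_mul_sq_sub_one {n : ℤ} {m : ℕ} (hm : m ≠ 0)
    (h : (n : ℝ) ≤ √2 * m) : (n : ℝ) ≤ √(2 * (m : ℝ) ^ 2 - 1) := by
  by_contra! hlt
  have hn : (0 : ℝ) < n := (Real.sqrt_nonneg _).trans_lt hlt
  have hlo : 2 * (m : ℝ) ^ 2 - 1 < (n : ℝ) ^ 2 := (Real.sqrt_lt' hn).1 hlt
  have hhi : (n : ℝ) ^ 2 ≤ 2 * (m : ℝ) ^ 2 := by
    calc (n : ℝ) ^ 2 ≤ (√2 * m) ^ 2 := pow_le_pow_left₀ hn.le h 2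
      _ = 2 * (m : ℝ) ^ 2 := by rw [mul_pow, Real.sq_sqrt zero_le_two]
  have hlo' : 2 * (m : ℤ) ^ 2 - 1 < n ^ 2 := by exact_mod_cast hlo
  have hhi' : n ^ 2 ≤ 2 * (m : ℤ) ^ 2 := by exact_mod_cast hhi
  exact Int.sq_ne_two_mul_sq (n := n) (Int.natCast_ne_zero.2 hm) (by omega)

theorem sqrt_two_mul_sq_sub_one_lt (m : ℕ) (hm : m ≠ 0) :
    √(2 * (m : ℝ) ^ 2 - 1) < √2 * m := by
  have hmR : (1 : ℝ) ≤ m := Nat.one_le_cast.2 (Nat.one_le_iff_ne_zero.2 hm)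
  calc √(2 * (m : ℝ) ^ 2 - 1) < √(2 * (m : ℝ) ^ 2) :=
        Real.sqrt_lt_sqrt (by nlinarith) (by linarith)
    _ = √2 * m := by rw [Real.sqrt_mul zero_le_two, Real.sqrt_sq (by positivity)]

theorem stmt_1 (m : ℕ) (hm : 0 < m)
    (k : ℤ) (hk : k = round ((1 - Real.sqrt 2 / 2) * m))
    (u : ℝ) (hu : u = (m : ℝ) - Real.sqrt (2 * (m : ℝ)^2 - 1) / 2) :
    u - 1/2 ≤ (k : ℝ) ∧ (k : ℝ) < u + 1/2 := by
  have hround := abs_le.1 (abs_sub_round ((1 - √2 / 2) * m))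
  rw [← hk] at hround
  subst hu
  constructor
  · have hn := intCast_le_sqrt_two_mul_sq_sub_one (n := 2 * (m - k) - 1) hm.ne'
      (by push_cast; linarith)
    push_cast at hn
    linarith
  · linarith [sqrt_two_mul_sq_sub_one_lt m hm.ne']
end

section
/- Let m ≥ 2 be an integer and let 1 ≤ k ≤ m−1 be an integer. Then the function x ↦ ((m−k)(2kx² + 2kx + m)) / ((m−k)·2kx² + m²), defined for x > 0, attains its maximum at x = m/(√((2m−k)k) − k), and the maximum value equals 1 + (√((2m−k)k) − k)/(2m). -/
/-! With `t = √((2m - k)k) - k`, one has `t (t + 2k) = 2k(m - k)`, and this relation turns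
`λ'_m(x, k)` into `1 + t / (2m)` minus a nonnegative multiple of `(t x - m)²`,
which vanishes at `x = m / t`. -/

open Real

noncomputable def lambdaPrime (m k x : ℝ) : ℝ :=
  ((m - k) * (2 * k * x ^ 2 + 2 * k * x + m)) / ((m - k) * (2 * k) * x ^ 2 + m ^ 2)

section

variable {m k t : ℝ}

lemma lambdaPrime_denom_pos (hk : 0 ≤ k) (hkm : k ≤ m) (hm : 0 < m) (x : ℝ) :
    0 < (m - k) * (2 * k) * x ^ 2 + m ^ 2 :=
  add_pos_of_nonneg_of_pos (by have := sub_nonneg.2 hkm; positivity) (by positivity)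

lemma lambdaPrime_eq (hk : 0 ≤ k) (hkm : k ≤ m) (hm : 0 < m) (ht : 0 < t)
    (htk : t * (t + 2 * k) = 2 * k * (m - k)) (x : ℝ) :
    lambdaPrime m k x = 1 + t / (2 * m) -
      k * (m - k) * (t * x - m) ^ 2 / (t * m * ((m - k) * (2 * k) * x ^ 2 + m ^ 2)) := by
  have hD := (lambdaPrime_denom_pos hk hkm hm x).ne'
  rw [lambdaPrime, eq_sub_iff_add_eq, div_add_div _ _ hD (by positivity),
    div_eq_iff (by positivity)]
  field_simp
  linear_combination (-((m - k) * (2 * k) * x ^ 2 + m ^ 2) * m ^ 2) * htk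

lemma lambdaPrime_le (hk : 0 ≤ k) (hkm : k ≤ m) (hm : 0 < m) (ht : 0 < t)
    (htk : t * (t + 2 * k) = 2 * k * (m - k)) (x : ℝ) :
    lambdaPrime m k x ≤ 1 + t / (2 * m) := by
  rw [lambdaPrime_eq hk hkm hm ht htk]
  refine sub_le_self _ (div_nonneg ?_ ?_)
  · exact mul_nonneg (mul_nonneg hk (sub_nonneg.2 hkm)) (sq_nonneg _)
  · exact (mul_pos (mul_pos ht hm) (lambdaPrime_denom_pos hk hkm hm x)).le

lemma lambdaPrime_div_eq (hk : 0 ≤ k) (hkm : k ≤ m) (hm : 0 < m) (ht : 0 < t)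
    (htk : t * (t + 2 * k) = 2 * k * (m - k)) :
    lambdaPrime m k (m / t) = 1 + t / (2 * m) := by
  rw [lambdaPrime_eq hk hkm hm ht htk, mul_div_cancel₀ _ ht.ne', sub_self]
  simp

lemma lt_sqrt_two_mul_sub_mul (hk : 0 < k) (hkm : k < m) : k < √((2 * m - k) * k) :=
  (lt_sqrt hk.le).2 (by nlinarith)

lemma sqrt_two_mul_sub_mul_sub_mul (hk : 0 ≤ k) (hkm : k ≤ m) :
    (√((2 * m - k) * k) - k) * (√((2 * m - k) * k) - k + 2 * k) = 2 * k * (m - k) := by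
  have hs := sq_sqrt (by nlinarith : 0 ≤ (2 * m - k) * k)
  linear_combination hs

end

theorem stmt_3_general (m k : ℕ) (hk1 : 1 ≤ k) (hkm : k ≤ m - 1)
    (f : ℝ → ℝ)
    (hf : ∀ x : ℝ, f x =
      (((m : ℝ) - k) * (2 * k * x^2 + 2 * k * x + m)) /
        (((m : ℝ) - k) * (2 * k) * x^2 + (m : ℝ)^2))
    (x₀ : ℝ) (hx₀ : x₀ = (m : ℝ) / (Real.sqrt ((2 * (m : ℝ) - k) * k) - k)) :
    (0 < x₀) ∧ (∀ x : ℝ, 0 < x → f x ≤ f x₀) ∧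
      f x₀ = 1 + (Real.sqrt ((2 * (m : ℝ) - k) * k) - k) / (2 * m) := by
  have hk : (0 : ℝ) < k := by exact_mod_cast hk1
  have hkm' : (k : ℝ) < m := by exact_mod_cast (by omega : k < m)
  have hm : (0 : ℝ) < m := hk.trans hkm'
  have ht := sub_pos.2 (lt_sqrt_two_mul_sub_mul hk hkm')
  have htk := sqrt_two_mul_sub_mul_sub_mul hk.le hkm'.le
  have hf' : ∀ x, f x = lambdaPrime m k x := hf
  subst hx₀
  refine ⟨div_pos hm ht, fun x _ => ?_, ?_⟩
  · rw [hf', hf', lambdaPrime_div_eq hk.le hkm'.le hm ht htk]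
    exact lambdaPrime_le hk.le hkm'.le hm ht htk x
  · rw [hf', lambdaPrime_div_eq hk.le hkm'.le hm ht htk]

theorem stmt_3 (m k : ℕ) (hm : 2 ≤ m) (hk1 : 1 ≤ k) (hkm : k ≤ m - 1)
    (f : ℝ → ℝ)
    (hf : ∀ x : ℝ, f x =
      (((m : ℝ) - k) * (2 * k * x^2 + 2 * k * x + m)) /
        (((m : ℝ) - k) * (2 * k) * x^2 + (m : ℝ)^2))
    (x₀ : ℝ) (hx₀ : x₀ = (m : ℝ) / (Real.sqrt ((2 * (m : ℝ) - k) * k) - k)) :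
    (0 < x₀) ∧ (∀ x : ℝ, 0 < x → f x ≤ f x₀) ∧
      f x₀ = 1 + (Real.sqrt ((2 * (m : ℝ) - k) * k) - k) / (2 * m) :=
  stmt_3_general m k hk1 hkm f hf x₀ hx₀
end

section
/- For every positive integer m with k_m := ⌊(1 − √2/2)m⌉, the machine-dependent bound satisfies 1 + (√((2m − k_m)k_m) − k_m)/(2m) ≤ (1 + √2)/2, and the difference (1+√2)/2 − (1 + (√((2m−k_m)k_m) − k_m)/(2m)) tends to 0 as m → ∞. -/
/-! Write `k = (1 - √2/2) m + δ` with `|δ| ≤ 1/2` (rounding) and `Q = (√2/2) m + δ`. Then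
`(2m - k) k = Q² - 2δ²`, so the gap `(1 + √2)/2 - b` equals `(Q - √(Q² - 2δ²)) / 2m`, which lies
in `[0, 1/(2m)]` as soon as `Q ≥ 1`. -/

open Real Filter Topology

noncomputable def machineBound (m k : ℝ) : ℝ :=
  1 + (√((2 * m - k) * k) - k) / (2 * m)

lemma sqrt_sq_sub_le_self {Q e : ℝ} (hQ : 0 ≤ Q) (he : 0 ≤ e) : √(Q ^ 2 - e) ≤ Q :=
  sqrt_le_iff.mpr ⟨hQ, by linarith⟩

lemma sub_one_le_sqrt_sq_sub {Q e : ℝ} (hQ : 1 ≤ Q) (he : e ≤ 1) : Q - 1 ≤ √(Q ^ 2 - e) :=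
  le_sqrt_of_sq_le (by nlinarith)

lemma kk_sub_machineBound_eq {m : ℝ} (hm : m ≠ 0) (k : ℝ) :
    (1 + √2) / 2 - machineBound m k =
      (√2 / 2 * m + (k - (1 - √2 / 2) * m) -
        √((√2 / 2 * m + (k - (1 - √2 / 2) * m)) ^ 2 - 2 * (k - (1 - √2 / 2) * m) ^ 2)) /
        (2 * m) := by
  have hs : √2 ^ 2 = 2 := sq_sqrt zero_le_two
  have hrad : (2 * m - k) * k =
      (√2 / 2 * m + (k - (1 - √2 / 2) * m)) ^ 2 - 2 * (k - (1 - √2 / 2) * m) ^ 2 := by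
    linear_combination (-m ^ 2 / 2) * hs
  rw [machineBound, ← hrad]
  field_simp
  ring

lemma machineBound_le {m k : ℝ} (hm : 1 ≤ m) (hk : |k - (1 - √2 / 2) * m| ≤ 1 / 2) :
    machineBound m k ≤ (1 + √2) / 2 := by
  have hgap := kk_sub_machineBound_eq (by positivity : m ≠ 0) k
  have hs : 1 < √2 := by simpa using sqrt_lt_sqrt zero_le_one one_lt_two
  have hδ := abs_le.mp hk
  have hQ : 0 ≤ √2 / 2 * m + (k - (1 - √2 / 2) * m) := by nlinarith
  have hsqrt := sqrt_sq_sub_le_self hQ (by positivity : 0 ≤ 2 * (k - (1 - √2 / 2) * m) ^ 2)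
  have hgap_nonneg : 0 ≤ (1 + √2) / 2 - machineBound m k := by
    rw [hgap]
    apply div_nonneg <;> linarith
  linarith

lemma kk_sub_machineBound_le {m k : ℝ} (hm : 3 ≤ m) (hk : |k - (1 - √2 / 2) * m| ≤ 1 / 2) :
    (1 + √2) / 2 - machineBound m k ≤ 1 / (2 * m) := by
  have hs : 1.4 < √2 := by
    rw [lt_sqrt (by norm_num)]; norm_num
  have hδ := abs_le.mp hk
  have hQ : 1 ≤ √2 / 2 * m + (k - (1 - √2 / 2) * m) := by nlinarith
  have he : 2 * (k - (1 - √2 / 2) * m) ^ 2 ≤ 1 := by nlinarith [sq_abs (k - (1 - √2 / 2) * m)]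
  rw [kk_sub_machineBound_eq (by positivity) k]
  gcongr
  linarith [sub_one_le_sqrt_sq_sub hQ he]

theorem stmt_4
    (k : ℕ → ℤ) (hk : ∀ m : ℕ, k m = round ((1 - Real.sqrt 2 / 2) * m))
    (b : ℕ → ℝ)
    (hb : ∀ m : ℕ, b m =
      1 + (Real.sqrt ((2 * (m : ℝ) - k m) * k m) - k m) / (2 * m)) :
    (∀ m : ℕ, 1 ≤ m → b m ≤ (1 + Real.sqrt 2) / 2) ∧
      Filter.Tendsto (fun m : ℕ => (1 + Real.sqrt 2) / 2 - b m) Filter.atTop (nhds 0) := by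
  have hround (m : ℕ) : |(k m : ℝ) - (1 - √2 / 2) * m| ≤ 1 / 2 := by
    rw [hk, abs_sub_comm]
    exact abs_sub_round _
  have hb_le (m : ℕ) (hm : 1 ≤ m) : b m ≤ (1 + √2) / 2 :=
    hb m ▸ machineBound_le (by exact_mod_cast hm) (hround m)
  have h_inv : Tendsto (fun m : ℕ => 1 / 2 * (1 / (m : ℝ))) atTop (𝓝 0) := by
    simpa using tendsto_one_div_atTop_nhds_zero_nat.const_mul (1 / 2 : ℝ)
  refine ⟨hb_le, squeeze_zero' ?_ ?_ h_inv⟩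
  · filter_upwards [eventually_ge_atTop 1] with m hm
    linarith [hb_le m hm]
  · filter_upwards [eventually_ge_atTop 3] with m hm
    rw [hb m]
    calc _ ≤ 1 / (2 * (m : ℝ)) := kk_sub_machineBound_le (by exact_mod_cast hm) (hround m)
      _ = 1 / 2 * (1 / m) := by ring
end

section
/- For every α ∈ [1/2, 1], the function λ_L(s, x) = ((1 − s)(2sx(αx + 1) + 1)) / (2αs(1 − s)x² + 1), considered for fixed s ∈ (0, 1) as a function of x > 0, satisfies λ_L(s, x_s) = 1 + (1/2)(√((2(1 − s) + αs)αs)/α − s), where x_s = (αs + √((2(1 − s) + αs)αs)) / (2αs(1 − s)). -/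
/-! Writing `r = √((2(1 - s) + αs)αs)`, so that `r² - (αs)² = 2αs(1 - s)`, the critical point
`x_s = (αs + r) / (2αs(1 - s))` is just `1 / (r - αs)`. At that point the denominator of `λ_L`
becomes `2r / (r - αs)`, and the value follows by clearing denominators and using the relation
for `r²` once more. -/

noncomputable section

def lambdaL (α s x : ℝ) : ℝ :=
  ((1 - s) * (2 * s * x * (α * x + 1) + 1)) / (2 * α * s * (1 - s) * x ^ 2 + 1)

variable {α s r : ℝ}

lemma sub_ne_zero_of_sq_eq (hr : r ^ 2 = (2 * (1 - s) + α * s) * (α * s)) (hα : α ≠ 0)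
    (hs : s ≠ 0) (hs1 : s ≠ 1) : r - α * s ≠ 0 := by
  intro h
  exact mul_ne_zero (mul_ne_zero hα hs) (sub_ne_zero.mpr hs1.symm)
    (by linear_combination ((r + α * s) * h - hr) / 2)

lemma div_eq_inv_sub_of_sq_eq (hr : r ^ 2 = (2 * (1 - s) + α * s) * (α * s)) (hα : α ≠ 0)
    (hs : s ≠ 0) (hs1 : s ≠ 1) :
    (α * s + r) / (2 * α * s * (1 - s)) = (r - α * s)⁻¹ := by
  have hr' := sub_ne_zero_of_sq_eq hr hα hs hs1
  have hs1' : 1 - s ≠ 0 := sub_ne_zero.mpr (Ne.symm hs1)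
  field_simp
  linear_combination hr

lemma lambdaL_of_mul_sub_eq_one (hr : r ^ 2 = (2 * (1 - s) + α * s) * (α * s)) (hα : α ≠ 0)
    (hr0 : r ≠ 0) {x : ℝ} (hx : x * (r - α * s) = 1) :
    lambdaL α s x = 1 + (1 / 2) * (r / α - s) := by
  have hden : 2 * α * s * (1 - s) * x ^ 2 + 1 = 2 * r * x := by
    linear_combination -x ^ 2 * hr + (2 * r * x - x * (r - α * s) - 1) * hx
  have hx0 : x ≠ 0 := left_ne_zero_of_mul_eq_one hx
  rw [lambdaL, hden, div_eq_iff (by positivity)]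
  field_simp
  linear_combination α * hden - x * hr + α * s * hx

end

theorem stmt_6 (α s : ℝ) (hα : α ∈ Set.Icc (1/2 : ℝ) 1) (hs : s ∈ Set.Ioo (0 : ℝ) 1)
    (xs : ℝ)
    (hxs : xs = (α * s + Real.sqrt ((2 * (1 - s) + α * s) * (α * s))) / (2 * α * s * (1 - s))) :
    ((1 - s) * (2 * s * xs * (α * xs + 1) + 1)) / (2 * α * s * (1 - s) * xs^2 + 1)
      = 1 + (1/2) * (Real.sqrt ((2 * (1 - s) + α * s) * (α * s)) / α - s) := by
  obtain ⟨hs0, hs1⟩ := hs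
  have hα0 : 0 < α := by linarith [hα.1]
  have hrad : 0 < (2 * (1 - s) + α * s) * (α * s) := by
    have := mul_pos hα0 hs0
    nlinarith
  set r := Real.sqrt ((2 * (1 - s) + α * s) * (α * s))
  have hr : r ^ 2 = (2 * (1 - s) + α * s) * (α * s) := Real.sq_sqrt hrad.le
  rw [hxs, div_eq_inv_sub_of_sq_eq hr hα0.ne' hs0.ne' hs1.ne]
  exact lambdaL_of_mul_sub_eq_one hr hα0.ne' (Real.sqrt_pos.mpr hrad).ne'
    (inv_mul_cancel₀ (sub_ne_zero_of_sq_eq hr hα0.ne' hs0.ne' hs1.ne))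
end

section
/- For every α ∈ [1/2, 1], the function g(s) = 1 + (1/2)(√((2(1 − s) + αs)·αs)/α − s) on s ∈ (0, 1) attains its maximum at s = 1/(2 + √(2α)), and the maximum value is 1 + 1/(2α + √(8α)). -/
/-!
Put `Q(s) = (2(1 - s) + αs)·αs`, `t = √(2α)` and `s₀ = 1/(2 + t)`. The line
`ℓ(s) = t/2 + α(s - s₀)` satisfies `ℓ(s)² - Q(s) = 2α(s - s₀)²` and is nonnegative for `s ≥ 0`,
so `√Q ≤ ℓ` there, with equality at `s₀`. Hence `√Q(s)/α - s ≤ t/(2α) - s₀ = 1/(α + t)`,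
the last equality because `t² = 2α`.
-/

open Real

section Tangent

variable {α t s₀ : ℝ}

lemma tangent_sq_sub_quadratic (ht : t ^ 2 = 2 * α) (hs₀ : s₀ * (2 + t) = 1) (s : ℝ) :
    (t / 2 + α * (s - s₀)) ^ 2 - (2 * (1 - s) + α * s) * (α * s) = 2 * α * (s - s₀) ^ 2 := by
  obtain rfl : α = t ^ 2 / 2 := by linarith
  linear_combination t ^ 2 / 4 * ((2 - t) * (2 * s - s₀) - 1) * hs₀

lemma tangent_nonneg (ht : t ^ 2 = 2 * α) (ht₀ : 0 ≤ t) (hs₀ : s₀ * (2 + t) = 1) {s : ℝ}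
    (hs : 0 ≤ s) : 0 ≤ t / 2 + α * (s - s₀) := by
  have hs₀_pos : 0 < s₀ := by nlinarith
  have hα : 0 ≤ α := by nlinarith
  have : t / 2 + α * (s - s₀) = t * s₀ + α * s := by
    obtain rfl : α = t ^ 2 / 2 := by linarith
    linear_combination (-t / 2) * hs₀
  rw [this]
  positivity

lemma sqrt_quadratic_le_tangent (ht : t ^ 2 = 2 * α) (ht₀ : 0 ≤ t) (hs₀ : s₀ * (2 + t) = 1)
    {s : ℝ} (hs : 0 ≤ s) : √((2 * (1 - s) + α * s) * (α * s)) ≤ t / 2 + α * (s - s₀) := by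
  rw [sqrt_le_left (tangent_nonneg ht ht₀ hs₀ hs)]
  nlinarith [tangent_sq_sub_quadratic ht hs₀ s, sq_nonneg (s - s₀), sq_nonneg t]

lemma sqrt_quadratic_at_center (ht : t ^ 2 = 2 * α) (ht₀ : 0 ≤ t) (hs₀ : s₀ * (2 + t) = 1) :
    √((2 * (1 - s₀) + α * s₀) * (α * s₀)) = t / 2 := by
  have h := tangent_sq_sub_quadratic ht hs₀ s₀
  rw [sqrt_eq_iff_eq_sq _ (by positivity)] <;> nlinarith

lemma sqrt_quadratic_div_sub_le (ht : t ^ 2 = 2 * α) (ht₀ : 0 ≤ t) (hs₀ : s₀ * (2 + t) = 1)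
    (hα : 0 < α) {s : ℝ} (hs : 0 ≤ s) :
    √((2 * (1 - s) + α * s) * (α * s)) / α - s ≤
      √((2 * (1 - s₀) + α * s₀) * (α * s₀)) / α - s₀ := by
  rw [sqrt_quadratic_at_center ht ht₀ hs₀, sub_le_sub_iff, div_add' _ _ _ hα.ne',
    div_add' _ _ _ hα.ne', div_le_div_iff_of_pos_right hα]
  linarith [sqrt_quadratic_le_tangent ht ht₀ hs₀ hs]

lemma half_div_sub_eq (ht : t ^ 2 = 2 * α) (ht₀ : 0 < t) (hs₀ : s₀ * (2 + t) = 1) :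
    t / 2 / α - s₀ = 1 / (α + t) := by
  obtain rfl : α = t ^ 2 / 2 := by linarith
  obtain rfl : s₀ = 1 / (2 + t) := by rw [← hs₀]; field_simp
  field_simp
  ring

end Tangent

theorem stmt_7 (α : ℝ) (hα : α ∈ Set.Icc (1/2 : ℝ) 1)
    (g : ℝ → ℝ)
    (hg : ∀ s : ℝ, g s = 1 + (1/2) * (Real.sqrt ((2 * (1 - s) + α * s) * (α * s)) / α - s))
    (s₀ : ℝ) (hs₀ : s₀ = 1 / (2 + Real.sqrt (2 * α))) :
    s₀ ∈ Set.Ioo (0 : ℝ) 1 ∧ (∀ s ∈ Set.Ioo (0 : ℝ) 1, g s ≤ g s₀) ∧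
      g s₀ = 1 + 1 / (2 * α + Real.sqrt (8 * α)) := by
  have hα₀ : 0 < α := by linarith [hα.1]
  set t := √(2 * α)
  have ht : t ^ 2 = 2 * α := sq_sqrt (by positivity)
  have ht₀ : 0 < t := sqrt_pos.2 (by positivity)
  have hs₀t : s₀ * (2 + t) = 1 := by rw [hs₀]; field_simp
  refine ⟨⟨by nlinarith, by nlinarith⟩, fun s hs ↦ ?_, ?_⟩
  · rw [hg, hg]
    linarith [sqrt_quadratic_div_sub_le ht ht₀.le hs₀t hα₀ hs.1.le]
  · have h8 : √(8 * α) = 2 * t := by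
      rw [show 8 * α = (2 * t) ^ 2 by linear_combination -4 * ht, sqrt_sq (by positivity)]
    rw [hg, sqrt_quadratic_at_center ht ht₀.le hs₀t, half_div_sub_eq ht ht₀ hs₀t, h8]
    field_simp
end

section
/- For every Δ ≥ 0, the function α ↦ 1 + (1/2)·max{ 1/(α + √(2α)), (1 + Δ)/(1 + √(2/α)) } on the interval [1/2, 1] is minimized at α = 1/min{2, 1 + Δ}, and the minimum value is 1 + (1/2)·(1 + Δ)/(1 + min{2, √(2(1 + Δ))}). -/
/-!
Write the bound as `1 + max (g α) (h α) / 2` with `g α = 1 / (α + √(2α))` decreasing and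
`h α = (1 + Δ) / (1 + √(2/α))` increasing in `α`. At `α = 1 / t` both curves take the value
`t / (1 + √(2t))` when `t = 1 + Δ`, so for `Δ ≤ 1` they cross at `α = 1 / (1 + Δ) ∈ [1/2, 1]`,
and the maximum of a decreasing and an increasing function is smallest at their crossing.
For `Δ ≥ 1` the crossing lies left of the interval: already at `α = 1/2` we have
`g = 2/3 ≤ (1 + Δ)/3 = h`, so the maximum is `h`, which is increasing, hence minimal at `1/2`.
-/

open Set

section MaxOfMonotone

variable {α β : Type*} [LinearOrder β] {s : Set α} {g h : α → β} {a : α}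

theorem isMinOn_max_of_antitoneOn_of_monotoneOn_of_eq [LinearOrder α]
    (hg : AntitoneOn g s) (hh : MonotoneOn h s) (ha : a ∈ s) (hgh : g a = h a) :
    IsMinOn (fun x => max (g x) (h x)) s a := by
  refine isMinOn_iff.2 fun x hx => ?_
  rcases le_total x a with hxa | hax
  · calc max (g a) (h a) = g a := by rw [hgh, max_self]
      _ ≤ g x := hg hx ha hxa
      _ ≤ max (g x) (h x) := le_max_left _ _
  · calc max (g a) (h a) = h a := by rw [hgh, max_self]
      _ ≤ h x := hh ha hx hax
      _ ≤ max (g x) (h x) := le_max_right _ _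

theorem isMinOn_max_of_monotoneOn_of_isLeast [Preorder α] (hh : MonotoneOn h s)
    (ha : IsLeast s a) (hgh : g a ≤ h a) :
    IsMinOn (fun x => max (g x) (h x)) s a :=
  isMinOn_iff.2 fun x hx => calc
    max (g a) (h a) = h a := max_eq_right hgh
    _ ≤ h x := hh ha.1 hx (ha.2 hx)
    _ ≤ max (g x) (h x) := le_max_right _ _

end MaxOfMonotone

theorem antitoneOn_one_div_add_sqrt_two_mul :
    AntitoneOn (fun α : ℝ => 1 / (α + √(2 * α))) (Ioi 0) := by
  intro a (ha : 0 < a) b _ hab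
  dsimp only
  gcongr

theorem monotoneOn_div_one_add_sqrt_two_div {c : ℝ} (hc : 0 ≤ c) :
    MonotoneOn (fun α : ℝ => c / (1 + √(2 / α))) (Ioi 0) := by
  intro a (ha : 0 < a) b _ hab
  dsimp only
  gcongr

theorem sqrt_two_mul_one_div {t : ℝ} (ht : 0 < t) : √(2 * (1 / t)) = √(2 * t) / t := by
  rw [eq_div_iff ht.ne', ← Real.sqrt_sq ht.le, ← Real.sqrt_mul (by positivity),
    Real.sqrt_sq ht.le]
  field_simp

theorem one_div_add_sqrt_two_mul_one_div {t : ℝ} (ht : 0 < t) :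
    1 / (1 / t + √(2 * (1 / t))) = t / (1 + √(2 * t)) := by
  rw [sqrt_two_mul_one_div ht, ← add_div, one_div_div]

theorem sqrt_two_div_one_div (t : ℝ) : √(2 / (1 / t)) = √(2 * t) := by
  rw [div_div_eq_mul_div, div_one]

noncomputable def kawaguchiKyanMax (Δ α : ℝ) : ℝ :=
  max (1 / (α + √(2 * α))) ((1 + Δ) / (1 + √(2 / α)))

section KawaguchiKyanMax

variable {Δ : ℝ}

theorem isMinOn_kawaguchiKyanMax_of_le_one (hΔ : 0 ≤ Δ) (hΔ₁ : Δ ≤ 1) :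
    IsMinOn (kawaguchiKyanMax Δ) (Icc (1 / 2) 1) (1 / (1 + Δ)) ∧
      kawaguchiKyanMax Δ (1 / (1 + Δ)) = (1 + Δ) / (1 + √(2 * (1 + Δ))) := by
  have hpos : (0 : ℝ) < 1 + Δ := by linarith
  have hIcc : Icc (1 / 2 : ℝ) 1 ⊆ Ioi 0 := fun x hx => lt_of_lt_of_le (by norm_num) hx.1
  have hg : 1 / (1 / (1 + Δ) + √(2 * (1 / (1 + Δ)))) = (1 + Δ) / (1 + √(2 * (1 + Δ))) :=
    one_div_add_sqrt_two_mul_one_div hpos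
  have hh : (1 + Δ) / (1 + √(2 / (1 / (1 + Δ)))) = (1 + Δ) / (1 + √(2 * (1 + Δ))) := by
    rw [sqrt_two_div_one_div]
  refine ⟨isMinOn_max_of_antitoneOn_of_monotoneOn_of_eq
      (antitoneOn_one_div_add_sqrt_two_mul.mono hIcc)
      ((monotoneOn_div_one_add_sqrt_two_div hpos.le).mono hIcc) ?_ (hg.trans hh.symm), ?_⟩
  · constructor
    · rw [div_le_div_iff₀ (by norm_num) hpos]; linarith
    · rw [div_le_one hpos]; linarith
  · rw [kawaguchiKyanMax, hg, hh, max_self]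

theorem isMinOn_kawaguchiKyanMax_of_one_le (hΔ₁ : 1 ≤ Δ) :
    IsMinOn (kawaguchiKyanMax Δ) (Icc (1 / 2) 1) (1 / 2) ∧
      kawaguchiKyanMax Δ (1 / 2) = (1 + Δ) / 3 := by
  have hIcc : Icc (1 / 2 : ℝ) 1 ⊆ Ioi 0 := fun x hx => lt_of_lt_of_le (by norm_num) hx.1
  have hg : 1 / (1 / 2 + √(2 * (1 / 2))) = (2 / 3 : ℝ) := by
    rw [mul_one_div_cancel two_ne_zero, Real.sqrt_one]
    norm_num
  have hh : (1 + Δ) / (1 + √(2 / (1 / 2))) = (1 + Δ) / 3 := by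
    rw [show (2 : ℝ) / (1 / 2) = 2 ^ 2 by norm_num, Real.sqrt_sq zero_le_two]
    norm_num
  refine ⟨isMinOn_max_of_monotoneOn_of_isLeast
      ((monotoneOn_div_one_add_sqrt_two_div (by linarith)).mono hIcc)
      (isLeast_Icc (by norm_num)) ?_, ?_⟩
  · rw [hg, hh]
    linarith
  · rw [kawaguchiKyanMax, hg, hh, max_eq_right (by linarith)]

end KawaguchiKyanMax

theorem stmt_9 (Δ : ℝ) (hΔ : 0 ≤ Δ)
    (f : ℝ → ℝ)
    (hf : ∀ α : ℝ, f α =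
      1 + (1/2) * max (1 / (α + Real.sqrt (2 * α))) ((1 + Δ) / (1 + Real.sqrt (2 / α))))
    (α₀ : ℝ) (hα₀ : α₀ = 1 / min 2 (1 + Δ)) :
    α₀ ∈ Set.Icc (1/2 : ℝ) 1 ∧ (∀ α ∈ Set.Icc (1/2 : ℝ) 1, f α₀ ≤ f α) ∧
      f α₀ = 1 + (1/2) * (1 + Δ) / (1 + min 2 (Real.sqrt (2 * (1 + Δ)))) := by
  have hf' : ∀ α, f α = 1 + 1 / 2 * kawaguchiKyanMax Δ α := hf
  obtain ⟨hmin, hval⟩ : IsMinOn (kawaguchiKyanMax Δ) (Icc (1 / 2) 1) α₀ ∧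
      kawaguchiKyanMax Δ α₀ = (1 + Δ) / (1 + min 2 √(2 * (1 + Δ))) := by
    rcases le_total Δ 1 with hΔ₁ | hΔ₁
    · have hsqrt : √(2 * (1 + Δ)) ≤ 2 :=
        Real.sqrt_le_iff.2 ⟨zero_le_two, by linarith⟩
      rw [hα₀, min_eq_right (by linarith), min_eq_right hsqrt]
      exact isMinOn_kawaguchiKyanMax_of_le_one hΔ hΔ₁
    · have hsqrt : 2 ≤ √(2 * (1 + Δ)) :=
        Real.le_sqrt_of_sq_le (by linarith)
      rw [hα₀, min_eq_left (by linarith), min_eq_left hsqrt]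
      norm_num1
      exact isMinOn_kawaguchiKyanMax_of_one_le hΔ₁
  have hmem : α₀ ∈ Icc (1 / 2 : ℝ) 1 := by
    rw [hα₀]
    refine ⟨by gcongr; exact min_le_left _ _, ?_⟩
    rw [div_le_one (by positivity)]
    exact le_min one_le_two (by linarith)
  refine ⟨hmem, fun α hα => ?_, ?_⟩
  · rw [hf', hf']
    have := isMinOn_iff.1 hmin α hα
    gcongr
  · rw [hf', hval]
    ring
end

section
/- Suppose random variables X, Y, and nonnegative reals ρ_j, w_j = ρ_j·E[p_j], Var[p_j] ≤ Δ·E[p_j]², E[p_j] ≤ E[C_j^{Π*}], and E[Σρ_j p_j C_j^{WSEPT}] ≤ (1+β)·E[Σ ρ_j p_j C_j^{Π*}] hold, where p_j is independent of the start times under both WSEPT and Π*. Then E[Σ w_j C_j^{WSEPT}] ≤ (1 + β(1+Δ))·E[Σ w_j C_j^{Π*}]. -/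
/-!
By non-anticipativity `p_j` is independent of its start time `S_j`, so taking expectations in the
realizationwise WSPT guarantee gives it in terms of `E[p_j] E[S_j] + E[p_j²]`, while the WSEPT
objective involves `E[p_j] E[S_j] + E[p_j]²`. The variance bound `E[p_j²] ≤ (1 + Δ) E[p_j]²`
turns the extra `β E[p_j²]` into `β (1 + Δ) E[p_j]²`, and the remaining slack
`β Δ E[p_j] E[S_j^{Π*}]` is nonnegative because start times under `Π*` have nonnegative mean.
-/

open MeasureTheory ProbabilityTheory

section Deterministic

variable {ι : Type*} [Fintype ι]

theorem sum_mul_add_le_of_sum_mul_add_sq_le (ρ E sW sO Q : ι → ℝ) {Δ β : ℝ}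
    (hΔ : 0 ≤ Δ) (hβ : 0 ≤ β) (hρ : ∀ j, 0 ≤ ρ j) (hE : ∀ j, 0 ≤ E j) (hsO : ∀ j, 0 ≤ sO j)
    (hQ : ∀ j, Q j ≤ (1 + Δ) * E j ^ 2)
    (h : ∑ j, ρ j * (E j * sW j + Q j) ≤ (1 + β) * ∑ j, ρ j * (E j * sO j + Q j)) :
    ∑ j, ρ j * E j * (sW j + E j) ≤ (1 + β * (1 + Δ)) * ∑ j, ρ j * E j * (sO j + E j) := by
  have hslack : 0 ≤ ∑ j, ρ j * (β * Δ * (E j * sO j) + β * ((1 + Δ) * E j ^ 2 - Q j)) :=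
    Finset.sum_nonneg fun j _ => mul_nonneg (hρ j) <| add_nonneg
      (mul_nonneg (mul_nonneg hβ hΔ) (mul_nonneg (hE j) (hsO j)))
      (mul_nonneg hβ (sub_nonneg.2 (hQ j)))
  have hdiff : (1 + β * (1 + Δ)) * ∑ j, ρ j * E j * (sO j + E j) - ∑ j, ρ j * E j * (sW j + E j)
      = ((1 + β) * ∑ j, ρ j * (E j * sO j + Q j) - ∑ j, ρ j * (E j * sW j + Q j))
        + ∑ j, ρ j * (β * Δ * (E j * sO j) + β * ((1 + Δ) * E j ^ 2 - Q j)) := by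
    simp only [Finset.mul_sum, ← Finset.sum_sub_distrib, ← Finset.sum_add_distrib]
    exact Finset.sum_congr rfl fun j _ => by ring
  linarith

end Deterministic

section Moments

variable {Ω : Type*} [MeasurableSpace Ω] {μ : Measure Ω} {X S : Ω → ℝ}

theorem integral_sq_le_of_variance_le [IsProbabilityMeasure μ] {Δ : ℝ} (hX : MemLp X 2 μ)
    (hvar : variance X μ ≤ Δ * (∫ ω, X ω ∂μ) ^ 2) :
    ∫ ω, X ω ^ 2 ∂μ ≤ (1 + Δ) * (∫ ω, X ω ∂μ) ^ 2 := by
  rw [variance_eq_sub hX] at hvar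
  simp only [Pi.pow_apply] at hvar
  linarith

theorem integrable_mul_add_self_of_indepFun [IsFiniteMeasure μ] (hX : MemLp X 2 μ)
    (hS : Integrable S μ) (hXS : IndepFun X S μ) : Integrable (fun ω => X ω * (S ω + X ω)) μ := by
  simp only [mul_add, ← pow_two]
  exact (hXS.integrable_mul (hX.integrable one_le_two) hS).add hX.integrable_sq

theorem integral_mul_add_self_of_indepFun [IsFiniteMeasure μ] (hX : MemLp X 2 μ)
    (hS : Integrable S μ) (hXS : IndepFun X S μ) :
    ∫ ω, X ω * (S ω + X ω) ∂μ = (∫ ω, X ω ∂μ) * (∫ ω, S ω ∂μ) + ∫ ω, X ω ^ 2 ∂μ := by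
  have hXSint : Integrable (fun ω => X ω * S ω) μ :=
    hXS.integrable_mul (hX.integrable one_le_two) hS
  simp only [mul_add, ← pow_two]
  rw [integral_add hXSint hX.integrable_sq,
    hXS.integral_fun_mul_eq_mul_integral (hX.integrable one_le_two).aestronglyMeasurable
      hS.aestronglyMeasurable]

theorem integral_sum_mul_mul_add_self [IsFiniteMeasure μ] {ι : Type*} [Fintype ι] (ρ : ι → ℝ)
    {p S : ι → Ω → ℝ} (hp : ∀ j, MemLp (p j) 2 μ) (hS : ∀ j, Integrable (S j) μ)
    (hpS : ∀ j, IndepFun (p j) (S j) μ) :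
    ∫ ω, (∑ j, ρ j * (p j ω * (S j ω + p j ω))) ∂μ
      = ∑ j, ρ j * ((∫ ω, p j ω ∂μ) * (∫ ω, S j ω ∂μ) + ∫ ω, p j ω ^ 2 ∂μ) := by
  rw [integral_finsetSum _ fun j _ =>
    (integrable_mul_add_self_of_indepFun (hp j) (hS j) (hpS j)).const_mul (ρ j)]
  simp only [integral_const_mul, integral_mul_add_self_of_indepFun (hp _) (hS _) (hpS _)]

end Moments

/-- `SW j`, `SO j` are the start times of job `j` under WSEPT and under an optimal policy `Π*`. -/
theorem stmt_16_general {Ω : Type*} [MeasurableSpace Ω] (μ : Measure Ω) [IsProbabilityMeasure μ]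
    (n : ℕ) (p SW SO : Fin n → Ω → ℝ)
    (ρ w : Fin n → ℝ) (Δ β : ℝ) (hΔ : 0 ≤ Δ) (hβ : 0 ≤ β)
    (hp0 : ∀ j ω, 0 ≤ p j ω)
    (hρ : ∀ j, 0 ≤ ρ j)
    (hw : ∀ j, w j = ρ j * ∫ ω, p j ω ∂μ)
    (hp2 : ∀ j, MemLp (p j) 2 μ)
    (hSW : ∀ j, Integrable (SW j) μ) (hSO : ∀ j, Integrable (SO j) μ)
    (hindW : ∀ j, IndepFun (p j) (SW j) μ)
    (hindO : ∀ j, IndepFun (p j) (SO j) μ)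
    (hvar : ∀ j, variance (p j) μ ≤ Δ * (∫ ω, p j ω ∂μ)^2)
    (hEp : ∀ j, ∫ ω, p j ω ∂μ ≤ ∫ ω, (SO j ω + p j ω) ∂μ)
    (hwspt : ∫ ω, (∑ j, ρ j * (p j ω * (SW j ω + p j ω))) ∂μ ≤
      (1 + β) * ∫ ω, (∑ j, ρ j * (p j ω * (SO j ω + p j ω))) ∂μ) :
    ∑ j, w j * ∫ ω, (SW j ω + p j ω) ∂μ ≤
      (1 + β * (1 + Δ)) * ∑ j, w j * ∫ ω, (SO j ω + p j ω) ∂μ := by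
  have hpint : ∀ j, Integrable (p j) μ := fun j => (hp2 j).integrable one_le_two
  have hCW : ∀ j, ∫ ω, (SW j ω + p j ω) ∂μ = ∫ ω, SW j ω ∂μ + ∫ ω, p j ω ∂μ :=
    fun j => integral_add (hSW j) (hpint j)
  have hCO : ∀ j, ∫ ω, (SO j ω + p j ω) ∂μ = ∫ ω, SO j ω ∂μ + ∫ ω, p j ω ∂μ :=
    fun j => integral_add (hSO j) (hpint j)
  rw [integral_sum_mul_mul_add_self ρ hp2 hSW hindW,
    integral_sum_mul_mul_add_self ρ hp2 hSO hindO] at hwspt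
  simp only [hw, hCW, hCO]
  exact sum_mul_add_le_of_sum_mul_add_sq_le ρ (fun j => ∫ ω, p j ω ∂μ) _ _
    (fun j => ∫ ω, p j ω ^ 2 ∂μ) hΔ hβ hρ (fun j => integral_nonneg (hp0 j))
    (fun j => by linarith [hEp j, hCO j])
    (fun j => integral_sq_le_of_variance_le (hp2 j) (hvar j)) hwspt

/-- Abstract core of the WSPT→WSEPT transfer theorem. `SW j`/`SO j` are the start times of
job `j` under WSEPT and under an optimal policy `Π*`; completion times are `S + p`. -/
theorem stmt_16 {Ω : Type*} [MeasurableSpace Ω] (μ : Measure Ω) [IsProbabilityMeasure μ]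
    (n : ℕ) (p SW SO : Fin n → Ω → ℝ)
    (ρ w : Fin n → ℝ) (Δ β : ℝ) (hΔ : 0 ≤ Δ) (hβ : 0 ≤ β)
    (hp0 : ∀ j ω, 0 ≤ p j ω)
    (hρ : ∀ j, 0 ≤ ρ j)
    (hw : ∀ j, w j = ρ j * ∫ ω, p j ω ∂μ)
    (hp2 : ∀ j, MemLp (p j) 2 μ)
    (hSW : ∀ j, Integrable (SW j) μ) (hSO : ∀ j, Integrable (SO j) μ)
    (hpSW : ∀ j, Integrable (fun ω => p j ω * SW j ω) μ)
    (hpSO : ∀ j, Integrable (fun ω => p j ω * SO j ω) μ)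
    (hindW : ∀ j, IndepFun (p j) (SW j) μ)
    (hindO : ∀ j, IndepFun (p j) (SO j) μ)
    (hvar : ∀ j, variance (p j) μ ≤ Δ * (∫ ω, p j ω ∂μ)^2)
    (hEp : ∀ j, ∫ ω, p j ω ∂μ ≤ ∫ ω, (SO j ω + p j ω) ∂μ)
    (hwspt : ∫ ω, (∑ j, ρ j * (p j ω * (SW j ω + p j ω))) ∂μ ≤
      (1 + β) * ∫ ω, (∑ j, ρ j * (p j ω * (SO j ω + p j ω))) ∂μ) :
    ∑ j, w j * ∫ ω, (SW j ω + p j ω) ∂μ ≤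
      (1 + β * (1 + Δ)) * ∑ j, w j * ∫ ω, (SO j ω + p j ω) ∂μ :=
  stmt_16_general μ n p SW SO ρ w Δ β hΔ hβ hp0 hρ hw hp2 hSW hSO hindW hindO hvar hEp hwspt
end

section
/- Let m ≥ 2, α ∈ (0,1], and consider any list schedule of jobs with processing times p₁,…,pₙ > 0 on m machines. Then Σⱼ pⱼ·Cⱼ(α) ≤ (1 + (m−1)/(2αm))·OPT_α, where OPT_α is the minimum over all m-machine schedules of Σⱼ pⱼCⱼ(α). Here the proof combines: (i) Σⱼ pⱼSⱼ^{list} ≤ (1/m)Σⱼ pⱼSⱼ^{1-machine}, and (ii) Σⱼ pⱼCⱼ*(1/2) ≥ (1/m)Σⱼ pⱼCⱼ^{1-machine}(1/2). -/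
/-- A feasible nonpreemptive schedule of `n` jobs with processing times `p` on `m` machines:
jobs on the same machine occupy disjoint time intervals, starting no earlier than time 0. -/
structure Schedule (m : ℕ) {n : ℕ} (p : Fin n → ℝ) where
  machine : Fin n → Fin m
  start : Fin n → ℝ
  start_nonneg : ∀ j, 0 ≤ start j
  disjoint : ∀ j k : Fin n, j ≠ k → machine j = machine k →
    start j + p j ≤ start k ∨ start k + p k ≤ start j

/-- A machine of minimum value of `f`. -/
noncomputable def argminFin {m : ℕ} (hm : 0 < m) (f : Fin m → ℝ) : Fin m :=
  (Finset.exists_min_image Finset.univ f ⟨⟨0, hm⟩, Finset.mem_univ _⟩).choose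

/-- Machine loads after list-scheduling the first `k` jobs (in index order, each job going
to a currently least loaded machine). -/
noncomputable def listLoads (m : ℕ) (hm : 0 < m) (p : ℕ → ℝ) : ℕ → Fin m → ℝ
  | 0 => fun _ => 0
  | k + 1 => fun i =>
      listLoads m hm p k i + (if i = argminFin hm (listLoads m hm p k) then p k else 0)

/-- Start time of job `j` in the list schedule: the minimum load when it is scheduled. -/
noncomputable def listStart (m : ℕ) (hm : 0 < m) (p : ℕ → ℝ) (j : ℕ) : ℝ :=
  Finset.inf' Finset.univ ⟨⟨0, hm⟩, Finset.mem_univ _⟩ (listLoads m hm p j)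

/-!
List scheduling starts job `j` no later than the average load `(∑_{k<j} p k) / m`, so
`∑ p j S j ≤ (P² - Q) / (2m)` with `P = ∑ p j` and `Q = ∑ p j²`. On a single machine the jobs
finished before `j` fit into `[0, S j]`; summing over the jobs, the machine with load `L`
contributes at least `(L² - ∑ p j²) / 2`, and Cauchy–Schwarz `∑ L² ≥ P² / m` shows that every
schedule has `∑ p j S j ≥ (P² / m - Q) / 2`. The two bounds differ by `(m - 1) Q / (2m)`, which
is at most `(m - 1) / (2αm)` times `OPT`, because `OPT ≥ α Q`.
-/

open Finset

section DisjointIntervals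

variable {ι : Type*} {A : Finset ι} {S q : ι → ℝ}

lemma end_le_start_of_start_le (hq : ∀ k ∈ A, 0 < q k)
    (hd : (A : Set ι).Pairwise fun j k => S j + q j ≤ S k ∨ S k + q k ≤ S j)
    {j k : ι} (hj : j ∈ A) (hk : k ∈ A) (hjk : j ≠ k) (hle : S j ≤ S k) :
    S j + q j ≤ S k := by
  rcases hd hj hk hjk with h | h
  · exact h
  · linarith [hq k hk]

variable [DecidableEq ι]

lemma sum_le_of_pairwise_disjoint_intervals (hq : ∀ k ∈ A, 0 < q k) (hS : ∀ k ∈ A, 0 ≤ S k)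
    (hd : (A : Set ι).Pairwise fun j k => S j + q j ≤ S k ∨ S k + q k ≤ S j)
    {T : ℝ} (hT : 0 ≤ T) (hend : ∀ k ∈ A, S k + q k ≤ T) :
    ∑ k ∈ A, q k ≤ T := by
  induction A using Finset.induction_on_max_value S generalizing T with
  | empty => simpa using hT
  | insert a s has hmax ih =>
    have hs : s ⊆ insert a s := subset_insert a s
    have hsum := ih (fun k hk => hq k (hs hk)) (fun k hk => hS k (hs hk))
      (hd.mono (coe_subset.mpr hs)) (hS a (mem_insert_self a s))
      fun k hk => end_le_start_of_start_le hq hd (hs hk) (mem_insert_self a s)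
        (ne_of_mem_of_not_mem hk has) (hmax k hk)
    rw [sum_insert has]
    linarith [hend a (mem_insert_self a s)]

lemma sq_sum_sub_sum_sq_le_two_mul_sum_mul (hq : ∀ k ∈ A, 0 < q k) (hS : ∀ k ∈ A, 0 ≤ S k)
    (hd : (A : Set ι).Pairwise fun j k => S j + q j ≤ S k ∨ S k + q k ≤ S j) :
    (∑ k ∈ A, q k) ^ 2 - ∑ k ∈ A, q k ^ 2 ≤ 2 * ∑ k ∈ A, q k * S k := by
  induction A using Finset.induction_on_max_value S with
  | empty => simp
  | insert a s has hmax ih =>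
    have hs : s ⊆ insert a s := subset_insert a s
    have hq' : ∀ k ∈ s, 0 < q k := fun k hk => hq k (hs hk)
    have hS' : ∀ k ∈ s, 0 ≤ S k := fun k hk => hS k (hs hk)
    have hd' := hd.mono (coe_subset.mpr hs)
    have hbefore : ∑ k ∈ s, q k ≤ S a :=
      sum_le_of_pairwise_disjoint_intervals hq' hS' hd' (hS a (mem_insert_self a s))
        fun k hk => end_le_start_of_start_le hq hd (hs hk) (mem_insert_self a s)
          (ne_of_mem_of_not_mem hk has) (hmax k hk)
    rw [sum_insert has, sum_insert has, sum_insert has]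
    nlinarith [ih hq' hS' hd', hq a (mem_insert_self a s)]

end DisjointIntervals

lemma Schedule.sq_sum_div_sub_sum_sq_le_two_mul_sum_mul_start {m n : ℕ} {p : Fin n → ℝ}
    (hp : ∀ j, 0 < p j) (σ : Schedule m p) :
    (∑ j, p j) ^ 2 / m - ∑ j, p j ^ 2 ≤ 2 * ∑ j, p j * σ.start j := by
  classical
  set load : Fin m → ℝ := fun i => ∑ j with σ.machine j = i, p j
  have hmachine (i : Fin m) :
      load i ^ 2 - ∑ j with σ.machine j = i, p j ^ 2
        ≤ 2 * ∑ j with σ.machine j = i, p j * σ.start j := by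
    refine sq_sum_sub_sum_sq_le_two_mul_sum_mul (fun j _ => hp j) (fun j _ => σ.start_nonneg j)
      fun j hj k hk hjk => σ.disjoint j k hjk ?_
    rw [mem_coe, mem_filter] at hj hk
    rw [hj.2, hk.2]
  have hCS : (∑ j, p j) ^ 2 / m ≤ ∑ i, load i ^ 2 := by
    refine div_le_of_le_mul₀ (Nat.cast_nonneg m) (sum_nonneg fun i _ => sq_nonneg _) ?_
    simpa [load, sum_fiberwise, mul_comm] using sq_sum_le_card_mul_sum_sq (s := univ) (f := load)
  calc (∑ j, p j) ^ 2 / m - ∑ j, p j ^ 2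
      ≤ ∑ i, (load i ^ 2 - ∑ j with σ.machine j = i, p j ^ 2) := by
        rw [sum_sub_distrib, sum_fiberwise]; linarith
    _ ≤ ∑ i, 2 * ∑ j with σ.machine j = i, p j * σ.start j := sum_le_sum fun i _ => hmachine i
    _ = 2 * ∑ j, p j * σ.start j := by rw [← mul_sum, sum_fiberwise]

def Schedule.serial {m n : ℕ} (hm : 0 < m) (p : Fin n → ℝ) (hp : ∀ j, 0 ≤ p j) :
    Schedule m p where
  machine _ := ⟨0, hm⟩
  start j := ∑ k ∈ Iio j, p k
  start_nonneg _ := sum_nonneg fun k _ => hp k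
  disjoint j k hjk _ := by
    have hbefore {a b : Fin n} (hab : a < b) : ∑ i ∈ Iio a, p i + p a ≤ ∑ i ∈ Iio b, p i := by
      rw [add_comm, ← sum_insert notMem_Iio_self, Iio_insert]
      exact sum_le_sum_of_subset_of_nonneg (fun i hi => mem_Iio.2 ((mem_Iic.1 hi).trans_lt hab))
        fun i _ _ => hp i
    rcases hjk.lt_or_gt with h | h
    · exact Or.inl (hbefore h)
    · exact Or.inr (hbefore h)

lemma sum_listLoads (m : ℕ) (hm : 0 < m) (p : ℕ → ℝ) (k : ℕ) :
    ∑ i, listLoads m hm p k i = ∑ j ∈ range k, p j := by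
  induction k with
  | zero => simp [listLoads]
  | succ k ih => simp [listLoads, sum_add_distrib, ih, sum_range_succ]

lemma mul_listStart_le (m : ℕ) (hm : 0 < m) (p : ℕ → ℝ) (j : ℕ) :
    m * listStart m hm p j ≤ ∑ k ∈ range j, p k :=
  calc m * listStart m hm p j = ∑ _i : Fin m, listStart m hm p j := by simp
    _ ≤ ∑ i, listLoads m hm p j i := sum_le_sum fun i _ => inf'_le _ (mem_univ i)
    _ = ∑ k ∈ range j, p k := sum_listLoads m hm p j

lemma two_mul_sum_mul_sum_range (p : ℕ → ℝ) (n : ℕ) :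
    2 * ∑ j ∈ range n, p j * ∑ k ∈ range j, p k
      = (∑ j ∈ range n, p j) ^ 2 - ∑ j ∈ range n, p j ^ 2 := by
  induction n with
  | zero => simp
  | succ n ih => simp only [sum_range_succ, mul_add, ih]; ring

lemma mul_two_mul_sum_mul_listStart_le (m n : ℕ) (hm : 0 < m) (p : ℕ → ℝ)
    (hp : ∀ j < n, 0 ≤ p j) :
    m * (2 * ∑ j : Fin n, p j * listStart m hm p j)
      ≤ (∑ j : Fin n, p j) ^ 2 - ∑ j : Fin n, p j ^ 2 := by
  rw [Fin.sum_univ_eq_sum_range (fun j => p j * listStart m hm p j),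
    Fin.sum_univ_eq_sum_range p, Fin.sum_univ_eq_sum_range (fun j => p j ^ 2),
    ← two_mul_sum_mul_sum_range, mul_left_comm, mul_sum]
  refine mul_le_mul_of_nonneg_left (sum_le_sum fun j hj => ?_) zero_le_two
  rw [mul_left_comm]
  exact mul_le_mul_of_nonneg_left (mul_listStart_le m hm p j) (hp j (mem_range.mp hj))

lemma sum_mul_add_mul_self {ι : Type*} (s : Finset ι) (w x : ι → ℝ) (α : ℝ) :
    ∑ j ∈ s, w j * (x j + α * w j) = ∑ j ∈ s, w j * x j + α * ∑ j ∈ s, w j ^ 2 := by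
  rw [mul_sum, ← sum_add_distrib]
  exact sum_congr rfl fun j _ => by ring

theorem stmt_17_general (m n : ℕ) (α : ℝ) (hα : α ∈ Set.Ioc (0 : ℝ) 1)
    (p : ℕ → ℝ) (hp : ∀ j < n, 0 < p j)
    (hm0 : 0 < m)
    (OPT : ℝ)
    (hOPT : OPT = sInf {v : ℝ | ∃ σ : Schedule m (fun j : Fin n => p j),
      v = ∑ j : Fin n, p j * (σ.start j + α * p j)}) :
    ∑ j : Fin n, p j * (listStart m hm0 p j + α * p j) ≤
      (1 + ((m : ℝ) - 1) / (2 * α * m)) * OPT := by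
  obtain ⟨hα0, -⟩ := hα
  set P := ∑ j : Fin n, p j
  set Q := ∑ j : Fin n, p j ^ 2
  have hpos (j : Fin n) : 0 < p j := hp j j.isLt
  have hm1 : (1 : ℝ) ≤ m := by exact_mod_cast hm0
  have hne : {v : ℝ | ∃ σ : Schedule m (fun j : Fin n => p j),
      v = ∑ j : Fin n, p j * (σ.start j + α * p j)}.Nonempty :=
    ⟨_, Schedule.serial hm0 _ fun j => (hpos j).le, rfl⟩
  have hOPT₁ : (P ^ 2 / m - Q) / 2 + α * Q ≤ OPT := hOPT ▸ le_csInf hne (by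
    rintro _ ⟨σ, rfl⟩
    rw [sum_mul_add_mul_self]
    linarith [σ.sq_sum_div_sub_sum_sq_le_two_mul_sum_mul_start hpos])
  have hOPT₂ : α * Q ≤ OPT := hOPT ▸ le_csInf hne (by
    rintro _ ⟨σ, rfl⟩
    rw [sum_mul_add_mul_self]
    linarith [sum_nonneg fun j (_ : j ∈ univ) => mul_nonneg (hpos j).le (σ.start_nonneg j)])
  have hlist : ∑ j : Fin n, p j * listStart m hm0 p j ≤ (P ^ 2 - Q) / (2 * m) := by
    rw [le_div_iff₀ (by positivity)]
    linarith [mul_two_mul_sum_mul_listStart_le m n hm0 p fun j hj => (hp j hj).le]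
  have hsplit : (P ^ 2 - Q) / (2 * m)
      = (P ^ 2 / m - Q) / 2 + ((m : ℝ) - 1) / (2 * α * m) * (α * Q) := by
    field_simp; ring
  calc ∑ j : Fin n, p j * (listStart m hm0 p j + α * p j)
      = ∑ j : Fin n, p j * listStart m hm0 p j + α * Q := sum_mul_add_mul_self _ _ _ _
    _ ≤ ((P ^ 2 / m - Q) / 2 + α * Q) + ((m : ℝ) - 1) / (2 * α * m) * (α * Q) := by
        rw [hsplit] at hlist; linarith
    _ ≤ OPT + ((m : ℝ) - 1) / (2 * α * m) * OPT := by gcongr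
    _ = (1 + ((m : ℝ) - 1) / (2 * α * m)) * OPT := by ring

theorem stmt_17 (m n : ℕ) (hm : 2 ≤ m) (α : ℝ) (hα : α ∈ Set.Ioc (0 : ℝ) 1)
    (p : ℕ → ℝ) (hp : ∀ j < n, 0 < p j)
    (hm0 : 0 < m)
    (OPT : ℝ)
    (hOPT : OPT = sInf {v : ℝ | ∃ σ : Schedule m (fun j : Fin n => p j),
      v = ∑ j : Fin n, p j * (σ.start j + α * p j)}) :
    ∑ j : Fin n, p j * (listStart m hm0 p j + α * p j) ≤
      (1 + ((m : ℝ) - 1) / (2 * α * m)) * OPT :=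
  stmt_17_general m n α hα p hp hm0 OPT hOPT
end

section
/- Let m ≥ 2, k ∈ {1,…,m−1}, x ≥ m/(m−k), and consider λ_m(x, y, k) = ((m−k)(2kx² + 2kx + 2y² + 2y + m)) / ((m−k)(2kx² + y²) + (y+m)²) for y ∈ [0, m/(m−k−1)] (y = 0 if k = m−1). For fixed x and k with k < m−1, the function y ↦ λ_m(x, y, k) is quasi-convex on [0, m/(m−k−1)]; in particular its maximum over this interval is attained at y = 0 or y = m/(m−k−1). -/
/-!
For `λ = N / D` with `D > 0`, `λ z ≤ λ u` is the sign condition `N z D u - N u D z ≤ 0`. For the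
quadratics `N`, `D` of `λ_m` this cross determinant factors as `(z - u)` times an affine–bilinear
form `B u z = p u z + q (u + z) + s` with `p = 2(m-k)(m+k-1) ≥ 0` and
`s = -4(m-k) k x (k x + m) ≤ 0`. On `[0, ∞)` such a form can never be positive on `(u, z)` and
negative on `(z, v)` for `u ≤ z ≤ v`, so `λ z ≤ max (λ u) (λ v)`: quasi-convexity on all of `[0, ∞)`.
-/

open Set

/- With `B a b = p a b + q (a + b) + s`: `B z v - B u z = (v - u) (p z + q)`, and when
`p z + q < 0` every term of `B u z` is nonpositive. -/
lemma bilinear_nonpos_or_nonneg {p q s u z v : ℝ} (hp : 0 ≤ p) (hs : s ≤ 0)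
    (hu : 0 ≤ u) (huz : u ≤ z) (hzv : z ≤ v) :
    p * u * z + q * (u + z) + s ≤ 0 ∨ 0 ≤ p * z * v + q * (z + v) + s := by
  have hz : 0 ≤ z := hu.trans huz
  rcases lt_or_ge (p * z + q) 0 with hslope | hslope
  · have hq : q < 0 := by nlinarith [mul_nonneg hp hz]
    left
    nlinarith [mul_nonpos_of_nonneg_of_nonpos hu hslope.le, mul_nonpos_of_nonneg_of_nonpos hz hq.le]
  · rcases le_or_gt (p * u * z + q * (u + z) + s) 0 with hB | hB
    · exact Or.inl hB
    · right
      nlinarith [mul_nonneg (sub_nonneg.2 (huz.trans hzv)) hslope]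

lemma quasiconvexOn_of_le_max {s : Set ℝ} {f : ℝ → ℝ} (hs : s.OrdConnected)
    (h : ∀ ⦃u⦄, u ∈ s → ∀ ⦃v⦄, v ∈ s → ∀ z ∈ Icc u v, f z ≤ max (f u) (f v)) :
    QuasiconvexOn ℝ s f := fun _ =>
  convex_iff_ordConnected.2 ⟨fun _u hu _v hv _z hz =>
    ⟨hs.out hu.1 hv.1 hz, (h hu.1 hv.1 _ hz).trans (max_le hu.2 hv.2)⟩⟩

lemma QuasiconvexOn.le_max_of_mem_Icc {s : Set ℝ} {f : ℝ → ℝ} (hf : QuasiconvexOn ℝ s f)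
    {u v z : ℝ} (hu : u ∈ s) (hv : v ∈ s) (hz : z ∈ Icc u v) : f z ≤ max (f u) (f v) :=
  ((hf _).ordConnected.out ⟨hu, le_max_left _ _⟩ ⟨hv, le_max_right _ _⟩ hz).2

theorem quasiconvexOn_div_of_cross_eq {N D : ℝ → ℝ} {p q s : ℝ}
    (hD : ∀ y, 0 ≤ y → 0 < D y) (hp : 0 ≤ p) (hs : s ≤ 0)
    (hcross : ∀ a b, N b * D a - N a * D b = (b - a) * (p * a * b + q * (a + b) + s)) :
    QuasiconvexOn ℝ (Ici 0) (fun y => N y / D y) := by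
  refine quasiconvexOn_of_le_max ordConnected_Ici fun u hu v hv z ⟨huz, hzv⟩ => ?_
  have hz : (0 : ℝ) ≤ z := le_trans hu huz
  rcases bilinear_nonpos_or_nonneg (q := q) hp hs hu huz hzv with hB | hB
  · refine le_max_of_le_left ((div_le_div_iff₀ (hD z hz) (hD u hu)).2 ?_)
    nlinarith [hcross u z, mul_nonpos_of_nonneg_of_nonpos (sub_nonneg.2 huz) hB]
  · refine le_max_of_le_right ((div_le_div_iff₀ (hD z hz) (hD v hv)).2 ?_)
    nlinarith [hcross z v, mul_nonneg (sub_nonneg.2 hzv) hB]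

theorem stmt_19_general (m k : ℕ) (hk : k < m - 1)
    (x : ℝ) (hx : (m : ℝ) / ((m : ℝ) - k) ≤ x)
    (f : ℝ → ℝ)
    (hf : ∀ y : ℝ, f y =
      (((m : ℝ) - k) * (2 * k * x^2 + 2 * k * x + 2 * y^2 + 2 * y + m)) /
        (((m : ℝ) - k) * (2 * k * x^2 + y^2) + (y + m)^2)) :
    QuasiconvexOn ℝ (Set.Icc (0 : ℝ) ((m : ℝ) / ((m : ℝ) - k - 1))) f ∧
      ∀ y ∈ Set.Icc (0 : ℝ) ((m : ℝ) / ((m : ℝ) - k - 1)),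
        f y ≤ max (f 0) (f ((m : ℝ) / ((m : ℝ) - k - 1))) := by
  have hkm : (k : ℝ) + 2 ≤ m := by exact_mod_cast (by omega : k + 2 ≤ m)
  have hmk : (0 : ℝ) < m - k := by linarith
  have hx0 : 0 ≤ x := le_trans (div_nonneg (by positivity) hmk.le) hx
  have hqc : QuasiconvexOn ℝ (Ici 0) f := by
    rw [funext hf]
    refine quasiconvexOn_div_of_cross_eq (p := 2 * (m - k) * (m + k - 1))
      (q := (m - k) * (2 * k * x ^ 2 * (m - k - 1) + m * (m + k - 1) - 2 * k * x * (m - k + 1)))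
      (s := -(4 * (m - k) * k * x * (k * x + m))) (fun y hy => ?_) ?_ ?_ (fun a b => by ring)
    · have : (0 : ℝ) < (y + m) ^ 2 := pow_pos (by linarith) 2
      nlinarith [mul_nonneg hmk.le (by positivity : (0 : ℝ) ≤ 2 * k * x ^ 2 + y ^ 2)]
    · exact mul_nonneg (by positivity) (by linarith)
    · exact neg_nonpos.2 (by positivity)
  have hend : (0 : ℝ) ≤ m / (m - k - 1) := div_nonneg (by positivity) (by linarith)
  exact ⟨(convex_Icc _ _).quasiconvexOn_restrict hqc Icc_subset_Ici_self,
    fun y hy => hqc.le_max_of_mem_Icc self_mem_Ici hend hy⟩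

theorem stmt_19 (m k : ℕ) (hm : 2 ≤ m) (hk1 : 1 ≤ k) (hk : k < m - 1)
    (x : ℝ) (hx : (m : ℝ) / ((m : ℝ) - k) ≤ x)
    (f : ℝ → ℝ)
    (hf : ∀ y : ℝ, f y =
      (((m : ℝ) - k) * (2 * k * x^2 + 2 * k * x + 2 * y^2 + 2 * y + m)) /
        (((m : ℝ) - k) * (2 * k * x^2 + y^2) + (y + m)^2)) :
    QuasiconvexOn ℝ (Set.Icc (0 : ℝ) ((m : ℝ) / ((m : ℝ) - k - 1))) f ∧
      ∀ y ∈ Set.Icc (0 : ℝ) ((m : ℝ) / ((m : ℝ) - k - 1)),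
        f y ≤ max (f 0) (f ((m : ℝ) / ((m : ℝ) - k - 1))) :=
  stmt_19_general m k hk x hx f hf
end
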